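/- Energy identity for the transform: Let V, W be complex inner product spaces, A = [[A₁₁, A₁₂],[A₂₁, A₂₂]] a block operator on V ⊕ W with A₁₁ invertible and B := Â its transform. For any g = (g₁, g₂) ∈ V ⊕ W, set f := (A₁₁g₁ + A₁₂g₂, g₂). Then Re⟨Bf, f⟩ = Re⟨Ag, g⟩. Consequently, if A is strictly accretive with constant κ on a subspace invariant under the map g ↦ f, so is B on its image. -/

import Mathlib

/-!
Writing `f = (A₁₁g₁ + A₁₂g₂, g₂)`, the transform `Â` undoes the elimination: `Âf = (g₁, A₂₁g₁ + A₂₂g₂)`.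
Hence `⟨Âf, f⟩ = ⟨g₁, (Ag)₁⟩ + ⟨(Ag)₂, g₂⟩`, whose real part is `Re⟨Ag, g⟩`. Since `‖f‖² ≤ M ‖g‖²`
with `M = 1 + ‖A₁₁‖² + ‖A₁₂‖²`, strict accretivity of `A` with constant `κ` at `g` gives that of `Â`
with constant `κ / M` at `f`.
-/

noncomputable section

variable {V W : Type*} [NormedAddCommGroup V] [InnerProductSpace ℂ V]
  [NormedAddCommGroup W] [InnerProductSpace ℂ W]

/-- The `(1,1)` block of `Â`, namely `A₁₁⁻¹`. -/
def hat11 (A11 : V ≃L[ℂ] V) : V ≃L[ℂ] V := A11.symm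

/-- The `(1,2)` block of `Â`, namely `−A₁₁⁻¹ A₁₂`. -/
def hat12 (A11 : V ≃L[ℂ] V) (A12 : W →L[ℂ] V) : W →L[ℂ] V :=
  -((A11.symm : V →L[ℂ] V).comp A12)

/-- The `(2,1)` block of `Â`, namely `A₂₁ A₁₁⁻¹`. -/
def hat21 (A11 : V ≃L[ℂ] V) (A21 : V →L[ℂ] W) : V →L[ℂ] W :=
  A21.comp (A11.symm : V →L[ℂ] V)

/-- The `(2,2)` block of `Â`, namely `A₂₂ − A₂₁ A₁₁⁻¹ A₁₂`. -/
def hat22 (A11 : V ≃L[ℂ] V) (A12 : W →L[ℂ] V) (A21 : V →L[ℂ] W) (A22 : W →L[ℂ] W) :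
    W →L[ℂ] W :=
  A22 - A21.comp ((A11.symm : V →L[ℂ] V).comp A12)

section Transform

variable (A11 : V ≃L[ℂ] V) (A12 : W →L[ℂ] V) (A21 : V →L[ℂ] W) (A22 : W →L[ℂ] W)
  (g1 : V) (g2 : W)

theorem hat11_add_hat12_apply :
    hat11 A11 (A11 g1 + A12 g2) + hat12 A11 A12 g2 = g1 := by
  simp [hat11, hat12]

theorem hat21_add_hat22_apply :
    hat21 A11 A21 (A11 g1 + A12 g2) + hat22 A11 A12 A21 A22 g2 = A21 g1 + A22 g2 := by
  simp [hat21, hat22]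

theorem re_inner_hat_eq_re_inner :
    ((inner ℂ (hat11 A11 (A11 g1 + A12 g2) + hat12 A11 A12 g2) (A11 g1 + A12 g2) : ℂ) +
        inner ℂ (hat21 A11 A21 (A11 g1 + A12 g2) + hat22 A11 A12 A21 A22 g2) g2).re =
      ((inner ℂ (A11 g1 + A12 g2) g1 : ℂ) + inner ℂ (A21 g1 + A22 g2) g2).re := by
  rw [hat11_add_hat12_apply, hat21_add_hat22_apply, Complex.add_re, Complex.add_re]
  exact congrArg (· + _) (inner_re_symm (𝕜 := ℂ) _ _)

end Transform

theorem ContinuousLinearMap.norm_add_apply_sq_le {𝕜 E F G : Type*} [NontriviallyNormedField 𝕜]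
    [SeminormedAddCommGroup E] [NormedSpace 𝕜 E] [SeminormedAddCommGroup F] [NormedSpace 𝕜 F]
    [SeminormedAddCommGroup G] [NormedSpace 𝕜 G] (T : E →L[𝕜] G) (U : F →L[𝕜] G) (x : E) (y : F) :
    ‖T x + U y‖ ^ 2 ≤ (‖T‖ ^ 2 + ‖U‖ ^ 2) * (‖x‖ ^ 2 + ‖y‖ ^ 2) := by
  have htri : ‖T x + U y‖ ≤ ‖T‖ * ‖x‖ + ‖U‖ * ‖y‖ :=
    (norm_add_le _ _).trans (add_le_add (T.le_opNorm x) (U.le_opNorm y))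
  calc ‖T x + U y‖ ^ 2 ≤ (‖T‖ * ‖x‖ + ‖U‖ * ‖y‖) ^ 2 := by gcongr
    _ ≤ (‖T‖ ^ 2 + ‖U‖ ^ 2) * (‖x‖ ^ 2 + ‖y‖ ^ 2) := by
      nlinarith [sq_nonneg (‖T‖ * ‖y‖ - ‖U‖ * ‖x‖)]

theorem stmt_9 (A11 : V ≃L[ℂ] V) (A12 : W →L[ℂ] V) (A21 : V →L[ℂ] W) (A22 : W →L[ℂ] W)
    (H : Set (V × W)) (κ : ℝ) (hκ : 0 < κ)
    (hacc : ∀ g ∈ H, κ * (‖g.1‖ ^ 2 + ‖g.2‖ ^ 2) ≤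
      (inner ℂ (A11 g.1 + A12 g.2) g.1 + inner ℂ (A21 g.1 + A22 g.2) g.2 : ℂ).re) :
    (∀ g1 : V, ∀ g2 : W,
      ((inner ℂ ((hat11 A11) (A11 g1 + A12 g2) + (hat12 A11 A12) g2)
          (A11 g1 + A12 g2) : ℂ) +
        (inner ℂ ((hat21 A11 A21) (A11 g1 + A12 g2) + (hat22 A11 A12 A21 A22) g2)
          (g2) : ℂ)).re =
      ((inner ℂ (A11 g1 + A12 g2) g1 : ℂ) + (inner ℂ (A21 g1 + A22 g2) g2 : ℂ)).re) ∧
    ∃ κ' : ℝ, 0 < κ' ∧ ∀ g ∈ H,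
      κ' * (‖(A11 g.1 + A12 g.2 : V)‖ ^ 2 + ‖g.2‖ ^ 2) ≤
        ((inner ℂ ((hat11 A11) (A11 g.1 + A12 g.2) + (hat12 A11 A12) g.2)
            (A11 g.1 + A12 g.2) : ℂ) +
          (inner ℂ ((hat21 A11 A21) (A11 g.1 + A12 g.2) + (hat22 A11 A12 A21 A22) g.2)
            (g.2) : ℂ)).re := by
  set M := 1 + ‖(A11 : V →L[ℂ] V)‖ ^ 2 + ‖A12‖ ^ 2
  have hM : 0 < M := by positivity
  refine ⟨re_inner_hat_eq_re_inner A11 A12 A21 A22, κ / M, by positivity, fun g hg => ?_⟩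
  rw [re_inner_hat_eq_re_inner]
  refine le_trans ?_ (hacc g hg)
  have hf : ‖(A11 g.1 + A12 g.2 : V)‖ ^ 2 + ‖g.2‖ ^ 2 ≤ (‖g.1‖ ^ 2 + ‖g.2‖ ^ 2) * M := by
    have := (A11 : V →L[ℂ] V).norm_add_apply_sq_le A12 g.1 g.2
    rw [ContinuousLinearEquiv.coe_coe] at this
    nlinarith [sq_nonneg ‖g.1‖]
  rw [div_mul_eq_mul_div, div_le_iff₀ hM, mul_assoc]
  exact mul_le_mul_of_nonneg_left hf hκ.le

end
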